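/- Let μ ∈ 𝒫([-r,r]) with r ≥ 1 and integers 0 < m < n. Then (1/n)H(μ, 𝒟_n) equals the average over 0 ≤ i ≤ n of the quantities (1/m)H(μ, 𝒟_{i+m} | 𝒟_i), up to an error of O(m/n + (log r)/n). -/

import Mathlib

/-!
Passing from `𝒟_i` to `𝒟_{i+1}` splits every cell into two halves, so by subadditivity of
`t ↦ -t log t` and the bound `log 2` on binary entropy, `Hᵢ := H(μ, 𝒟_i)` is nondecreasing in `i`
and grows by at most `log 2 ≤ 1` per step. The sum of the conditional entropies telescopes to
`∑_{i<m} (H_{n+1+i} - H_i)`, which these two facts place within `m (m + H₀)` of `m Hₙ`; and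
`H₀ ≤ log (2r + 2)` because `μ` charges at most `2r + 2` unit cells.
-/

open MeasureTheory

/-- Real-valued entropy of a measure on `ℝ` with respect to the dyadic partition `𝒟_i`
into intervals of length `2^{-i}`. -/
noncomputable def dyadEntropyR (μ : Measure ℝ) (i : ℕ) : ℝ :=
  ∑' k : ℤ, Real.negMulLog
    (μ (Set.Ico ((k : ℝ) * 2 ^ (-(i : ℤ))) (((k : ℝ) + 1) * 2 ^ (-(i : ℤ))))).toReal

open Real Function

lemma negMulLog_add_negMulLog {a b : ℝ} (ha : 0 ≤ a) (hb : 0 ≤ b) :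
    negMulLog a + negMulLog b = negMulLog (a + b) + (a + b) * binEntropy (a / (a + b)) := by
  rcases (add_nonneg ha hb).eq_or_lt with hs | hs
  · obtain ⟨rfl, rfl⟩ : a = 0 ∧ b = 0 := ⟨by linarith, by linarith⟩
    simp
  have hb' : b / (a + b) = 1 - a / (a + b) := by field_simp; ring
  conv_lhs => rw [← mul_div_cancel₀ a hs.ne', ← mul_div_cancel₀ b hs.ne']
  rw [negMulLog_mul, negMulLog_mul, binEntropy_eq_negMulLog_add_negMulLog_one_sub, ← hb']
  field_simp
  ring

lemma negMulLog_add_le {a b : ℝ} (ha : 0 ≤ a) (hb : 0 ≤ b) :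
    negMulLog (a + b) ≤ negMulLog a + negMulLog b := by
  have hs := add_nonneg ha hb
  rw [negMulLog_add_negMulLog ha hb]
  exact le_add_of_nonneg_right (mul_nonneg hs
    (binEntropy_nonneg (div_nonneg ha hs) (div_le_one_of_le₀ (le_add_of_nonneg_right hb) hs)))

lemma negMulLog_add_negMulLog_le {a b : ℝ} (ha : 0 ≤ a) (hb : 0 ≤ b) :
    negMulLog a + negMulLog b ≤ negMulLog (a + b) + (a + b) * log 2 := by
  rw [negMulLog_add_negMulLog ha hb]
  gcongr
  exact binEntropy_le_log_two

lemma sum_negMulLog_le_log_card {ι : Type*} {s : Finset ι} {p : ι → ℝ}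
    (hp : ∀ i ∈ s, 0 ≤ p i) (hp1 : ∑ i ∈ s, p i = 1) :
    ∑ i ∈ s, negMulLog (p i) ≤ log s.card := by
  have hN : (0 : ℝ) < s.card := by
    have : s.Nonempty := Finset.nonempty_of_sum_ne_zero (by rw [hp1]; exact one_ne_zero)
    exact_mod_cast this.card_pos
  have hJ := concaveOn_negMulLog.le_map_sum (t := s) (w := fun _ => (s.card : ℝ)⁻¹)
    (p := fun i => s.card * p i) (fun _ _ => by positivity) (by simp [hN.ne'])
    (fun i hi => Set.mem_Ici.2 (mul_nonneg hN.le (hp i hi)))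
  have hterm : ∀ i ∈ s, (s.card : ℝ)⁻¹ * negMulLog (s.card * p i)
      = negMulLog (p i) - p i * log s.card := by
    intro i _
    rw [negMulLog_mul, negMulLog]
    field_simp
    ring
  simp only [smul_eq_mul, inv_mul_cancel_left₀ hN.ne', hp1, negMulLog_one] at hJ
  rw [Finset.sum_congr rfl hterm, Finset.sum_sub_distrib, ← Finset.sum_mul, hp1] at hJ
  linarith

theorem HasSum.int_even_add_odd {M : Type*} [AddCommMonoid M] [TopologicalSpace M]
    [ContinuousAdd M] [RegularSpace M] {f : ℤ → M} {a : M} (h : HasSum f a) :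
    HasSum (fun k => f (2 * k) + f (2 * k + 1)) a := by
  refine ((Int.divModEquiv 2).symm.hasSum_iff.2 h).prod_fiberwise fun k => ?_
  simpa [Fin.sum_univ_two, mul_comm] using
    hasSum_fintype fun e : Fin 2 => f ((Int.divModEquiv 2).symm (k, e))

section Refinement

variable {p q : ℤ → ℝ} (hq : ∀ j, 0 ≤ q j) (hpq : ∀ k, p k = q (2 * k) + q (2 * k + 1))
  (hp_sum : Summable fun k => negMulLog (p k)) (hq_sum : Summable fun j => negMulLog (q j))
include hq hpq hp_sum hq_sum

theorem tsum_negMulLog_le_of_refine :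
    ∑' k, negMulLog (p k) ≤ ∑' j, negMulLog (q j) :=
  hasSum_le (fun k => hpq k ▸ negMulLog_add_le (hq _) (hq _)) hp_sum.hasSum
    hq_sum.hasSum.int_even_add_odd

theorem tsum_negMulLog_refine_le (hp : HasSum p 1) :
    ∑' j, negMulLog (q j) ≤ ∑' k, negMulLog (p k) + log 2 := by
  have hrhs :
      HasSum (fun k => negMulLog (p k) + p k * log 2) (∑' k, negMulLog (p k) + log 2) := by
    simpa using hp_sum.hasSum.add (hp.mul_right (log 2))
  exact hasSum_le (fun k => hpq k ▸ negMulLog_add_negMulLog_le (hq _) (hq _))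
    hq_sum.hasSum.int_even_add_odd hrhs

end Refinement

def dyadicCell (i : ℕ) (k : ℤ) : Set ℝ :=
  Set.Ico ((k : ℝ) * 2 ^ (-(i : ℤ))) (((k : ℝ) + 1) * 2 ^ (-(i : ℤ)))

lemma mem_dyadicCell_iff {i : ℕ} {k : ℤ} {x : ℝ} : x ∈ dyadicCell i k ↔ ⌊x * 2 ^ i⌋ = k := by
  have h : (0 : ℝ) < 2 ^ i := by positivity
  rw [dyadicCell, Set.mem_Ico, Int.floor_eq_iff, zpow_neg, zpow_natCast, ← div_eq_mul_inv,
    ← div_eq_mul_inv, div_le_iff₀ h, lt_div_iff₀ h]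

lemma pairwise_disjoint_dyadicCell (i : ℕ) : Pairwise (Disjoint on dyadicCell i) :=
  fun _ _ hne => Set.disjoint_left.2 fun _ hx hx' =>
    hne ((mem_dyadicCell_iff.1 hx).symm.trans (mem_dyadicCell_iff.1 hx'))

lemma iUnion_dyadicCell (i : ℕ) : ⋃ k, dyadicCell i k = Set.univ :=
  Set.eq_univ_of_forall fun _ => Set.mem_iUnion.2 ⟨_, mem_dyadicCell_iff.2 rfl⟩

lemma dyadicCell_eq_union (i : ℕ) (k : ℤ) :
    dyadicCell i k = dyadicCell (i + 1) (2 * k) ∪ dyadicCell (i + 1) (2 * k + 1) := by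
  have hc : (2 : ℝ) ^ (-(i : ℤ)) = 2 * 2 ^ (-((i + 1 : ℕ) : ℤ)) := by
    rw [Nat.cast_succ, neg_add, zpow_add₀ two_ne_zero, zpow_neg_one]
    ring
  have hpos : (0 : ℝ) < 2 ^ (-((i + 1 : ℕ) : ℤ)) := by positivity
  simp only [dyadicCell, hc]
  generalize (2 : ℝ) ^ (-((i + 1 : ℕ) : ℤ)) = c at hpos ⊢
  push_cast
  rw [Set.Ico_union_Ico_eq_Ico (by nlinarith) (by nlinarith)]
  congr 1 <;> ring

lemma dyadicCell_subset_compl {r : ℝ} (i : ℕ) {k : ℤ}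
    (hk : k ∉ Finset.Icc (-⌈r * 2 ^ i⌉) ⌊r * 2 ^ i⌋) : dyadicCell i k ⊆ (Set.Icc (-r) r)ᶜ := by
  rintro x hx ⟨hxl, hxr⟩
  have h : (0 : ℝ) ≤ 2 ^ i := by positivity
  rw [mem_dyadicCell_iff] at hx
  refine hk (Finset.mem_Icc.2 ⟨?_, ?_⟩) <;> rw [← hx]
  · rw [← Int.floor_neg]
    exact Int.floor_mono (by nlinarith)
  · exact Int.floor_mono (mul_le_mul_of_nonneg_right hxr h)

section Measure

variable (μ : Measure ℝ)

lemma measureReal_dyadicCell_eq_add [IsFiniteMeasure μ] (i : ℕ) (k : ℤ) :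
    μ.real (dyadicCell i k) =
      μ.real (dyadicCell (i + 1) (2 * k)) + μ.real (dyadicCell (i + 1) (2 * k + 1)) := by
  rw [dyadicCell_eq_union, measureReal_union (pairwise_disjoint_dyadicCell _ (by omega))
    measurableSet_Ico]

lemma hasSum_measureReal_dyadicCell [IsProbabilityMeasure μ] (i : ℕ) :
    HasSum (fun k => μ.real (dyadicCell i k)) 1 := by
  have h := ENNReal.hasSum_toReal (f := fun k => μ (dyadicCell i k)) (by
    rw [← measure_iUnion (pairwise_disjoint_dyadicCell i) fun _ => measurableSet_Ico]
    exact measure_ne_top μ _)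
  rwa [← ENNReal.tsum_toReal_eq (fun _ => measure_ne_top μ _), ← measure_iUnion
    (pairwise_disjoint_dyadicCell i) fun _ => measurableSet_Ico, iUnion_dyadicCell,
    measure_univ, ENNReal.toReal_one] at h

lemma dyadEntropyR_eq_tsum (i : ℕ) :
    dyadEntropyR μ i = ∑' k, negMulLog (μ.real (dyadicCell i k)) := rfl

lemma dyadEntropyR_nonneg [IsZeroOrProbabilityMeasure μ] (i : ℕ) : 0 ≤ dyadEntropyR μ i :=
  tsum_nonneg fun _ => negMulLog_nonneg measureReal_nonneg measureReal_le_one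

variable {μ} {r : ℝ} (hμ : μ (Set.Icc (-r) r)ᶜ = 0)
include hμ

lemma measureReal_dyadicCell_eq_zero (i : ℕ) {k : ℤ}
    (hk : k ∉ Finset.Icc (-⌈r * 2 ^ i⌉) ⌊r * 2 ^ i⌋) : μ.real (dyadicCell i k) = 0 := by
  rw [Measure.real, measure_mono_null (dyadicCell_subset_compl i hk) hμ, ENNReal.toReal_zero]

lemma summable_negMulLog_measureReal_dyadicCell (i : ℕ) :
    Summable fun k => negMulLog (μ.real (dyadicCell i k)) :=
  summable_of_ne_finset_zero fun _ hk => by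
    rw [measureReal_dyadicCell_eq_zero hμ i hk, negMulLog_zero]

lemma dyadEntropyR_le_succ [IsFiniteMeasure μ] (i : ℕ) :
    dyadEntropyR μ i ≤ dyadEntropyR μ (i + 1) :=
  tsum_negMulLog_le_of_refine (fun _ => measureReal_nonneg) (measureReal_dyadicCell_eq_add μ i)
    (summable_negMulLog_measureReal_dyadicCell hμ i)
    (summable_negMulLog_measureReal_dyadicCell hμ (i + 1))

lemma dyadEntropyR_succ_le [IsProbabilityMeasure μ] (i : ℕ) :
    dyadEntropyR μ (i + 1) ≤ dyadEntropyR μ i + log 2 :=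
  tsum_negMulLog_refine_le (fun _ => measureReal_nonneg) (measureReal_dyadicCell_eq_add μ i)
    (summable_negMulLog_measureReal_dyadicCell hμ i)
    (summable_negMulLog_measureReal_dyadicCell hμ (i + 1)) (hasSum_measureReal_dyadicCell μ i)

lemma dyadEntropyR_zero_le [IsProbabilityMeasure μ] : dyadEntropyR μ 0 ≤ log (2 * r + 2) := by
  set S := Finset.Icc (-⌈r⌉) ⌊r⌋
  have hS : ∀ k ∉ S, μ.real (dyadicCell 0 k) = 0 := fun _ hk =>
    measureReal_dyadicCell_eq_zero hμ 0 (by simpa only [pow_zero, mul_one] using hk)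
  have hS1 : ∑ k ∈ S, μ.real (dyadicCell 0 k) = 1 :=
    (hasSum_sum_of_ne_finset_zero hS).unique (hasSum_measureReal_dyadicCell μ 0)
  have hne : S.Nonempty := Finset.nonempty_of_sum_ne_zero (hS1 ▸ one_ne_zero)
  have hcard : (S.card : ℝ) ≤ 2 * r + 2 := by
    have hab := Finset.nonempty_Icc.1 hne
    rw [← Int.cast_natCast, Int.card_Icc, Int.toNat_of_nonneg (by omega)]
    push_cast
    linarith [Int.floor_le r, Int.ceil_lt_add_one r]
  rw [dyadEntropyR_eq_tsum, tsum_eq_sum fun k hk => by rw [hS k hk, negMulLog_zero]]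
  exact (sum_negMulLog_le_log_card (fun _ _ => measureReal_nonneg) hS1).trans
    (log_le_log (by exact_mod_cast hne.card_pos) hcard)

end Measure

theorem Finset.sum_range_sub_shift {M : Type*} [AddCommGroup M] (f : ℕ → M) (n m : ℕ) :
    ∑ i ∈ Finset.range n, (f (i + m) - f i) = ∑ i ∈ Finset.range m, (f (n + i) - f i) := by
  have h := (Finset.sum_range_add f m n).symm.trans (add_comm m n ▸ Finset.sum_range_add f n m)
  simp only [Finset.sum_sub_distrib, sub_eq_sub_iff_add_eq_add, add_comm _ m]
  rw [add_comm, h, add_comm]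

lemma abs_div_sub_div_succ_le {E G c M N : ℝ} (hN : 1 ≤ N) (hM : 1 ≤ M) (hc : 0 ≤ c)
    (hE₀ : 0 ≤ E) (hE : E ≤ N + c) (hG : |E - G| ≤ M + c) :
    |1 / N * E - 1 / (N + 1) * G| ≤ 2 * (M + c) / N := by
  have hsplit : 1 / N * E - 1 / (N + 1) * G = E / (N * (N + 1)) + (E - G) / (N + 1) := by
    field_simp
    ring
  calc |1 / N * E - 1 / (N + 1) * G|
      ≤ |E / (N * (N + 1))| + |(E - G) / (N + 1)| := hsplit ▸ abs_add_le _ _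
    _ ≤ (N + c) / (N * (N + 1)) + (M + c) / (N + 1) := by
        rw [abs_of_nonneg (by positivity), abs_div, abs_of_pos (by positivity : 0 < N + 1)]
        gcongr
    _ ≤ (M + c) / N + (M + c) / N := by
        gcongr ?_ + ?_
        · rw [div_le_div_iff₀ (by positivity) (by positivity)]
          have hN₀ : (0 : ℝ) ≤ N := by linarith
          nlinarith [mul_le_mul_of_nonneg_right hM (by positivity : (0 : ℝ) ≤ N * (N + 1)),
            mul_nonneg (mul_nonneg hc hN₀) hN₀]
        · exact div_le_div_of_nonneg_left (by positivity) (by positivity) (by linarith)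
    _ = 2 * (M + c) / N := by ring

section Profile

variable {H : ℕ → ℝ} (hstep : ∀ i, H (i + 1) ≤ H i + 1)
include hstep

lemma le_add_of_succ_le_add_one (i k : ℕ) : H (i + k) ≤ H i + k := by
  induction k with
  | zero => simp
  | succ k ih =>
    rw [← add_assoc]
    push_cast
    linarith [hstep (i + k)]

variable (h₀ : ∀ i, 0 ≤ H i) (hmono : Monotone H)
include h₀ hmono

lemma abs_sub_avg_shift_le {m : ℕ} (hm : 0 < m) (n : ℕ) :
    |H n - 1 / m * ∑ i ∈ Finset.range m, (H (n + 1 + i) - H i)| ≤ m + H 0 := by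
  have hm' : (0 : ℝ) < m := by exact_mod_cast hm
  have hupper : ∀ i ∈ Finset.range m, H (n + 1 + i) - H i ≤ H n + m := fun i hi => by
    have := le_add_of_succ_le_add_one hstep n (1 + i)
    have : (i : ℝ) + 1 ≤ m := by exact_mod_cast Finset.mem_range.1 hi
    rw [← add_assoc] at *
    push_cast at *
    linarith [h₀ i]
  have hlower : ∀ i ∈ Finset.range m, H n - (m + H 0) ≤ H (n + 1 + i) - H i := fun i hi => by
    have := le_add_of_succ_le_add_one hstep 0 i
    have : (i : ℝ) + 1 ≤ m := by exact_mod_cast Finset.mem_range.1 hi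
    rw [zero_add] at *
    linarith [hmono (by omega : n ≤ n + 1 + i)]
  have hsum_le := Finset.sum_le_sum hupper
  have hle_sum := Finset.sum_le_sum hlower
  simp only [Finset.sum_const, Finset.card_range, nsmul_eq_mul] at hsum_le hle_sum
  have havg_le : 1 / m * ∑ i ∈ Finset.range m, (H (n + 1 + i) - H i) ≤ H n + m := by
    rw [one_div_mul_eq_div, div_le_iff₀ hm']
    linarith
  have hle_avg : H n - (m + H 0) ≤ 1 / m * ∑ i ∈ Finset.range m, (H (n + 1 + i) - H i) := by
    rw [one_div_mul_eq_div, le_div_iff₀ hm']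
    linarith
  rw [abs_le]
  constructor <;> linarith [h₀ 0]

theorem abs_div_sub_avg_shift_le {m n : ℕ} (hm : 0 < m) (hn : 0 < n) :
    |1 / n * H n - 1 / (n + 1) * ∑ i ∈ Finset.range (n + 1), 1 / m * (H (i + m) - H i)| ≤
      2 * (m + H 0) / n := by
  rw [← Finset.mul_sum, Finset.sum_range_sub_shift]
  refine abs_div_sub_div_succ_le (by exact_mod_cast hn) (by exact_mod_cast hm) (h₀ 0) (h₀ n) ?_
    (abs_sub_avg_shift_le hstep h₀ hmono hm n)
  simpa [add_comm] using le_add_of_succ_le_add_one hstep 0 n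

end Profile

/-- Global entropy from local (conditional) entropies: for `μ ∈ 𝒫([-r,r])` with `r ≥ 1`
and integers `0 < m < n`,
`(1/n) H(μ,𝒟_n) = avg_{0 ≤ i ≤ n} (1/m) H(μ, 𝒟_{i+m} | 𝒟_i) + O(m/n + (log r)/n)`,
where `H(μ, 𝒟_{i+m} | 𝒟_i) = H(μ, 𝒟_{i+m}) - H(μ, 𝒟_i)`. -/
theorem entropy_local_to_global :
    ∃ C : ℝ, 0 < C ∧ ∀ (r : ℝ) (μ : Measure ℝ), IsProbabilityMeasure μ →
      1 ≤ r → μ (Set.Icc (-r) r) = 1 →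
      ∀ m n : ℕ, 0 < m → m < n →
        |(1 / n : ℝ) * dyadEntropyR μ n -
          (1 / (n + 1) : ℝ) * ∑ i ∈ Finset.range (n + 1),
            (1 / m : ℝ) * (dyadEntropyR μ (i + m) - dyadEntropyR μ i)| ≤
        C * (m + Real.log r) / n := by
  refine ⟨6, by norm_num, fun r μ _ hr hμr m n hm hmn => ?_⟩
  have hμ : μ (Set.Icc (-r) r)ᶜ = 0 := (prob_compl_eq_zero_iff measurableSet_Icc).2 hμr
  have hstep : ∀ i, dyadEntropyR μ (i + 1) ≤ dyadEntropyR μ i + 1 := fun i =>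
    (dyadEntropyR_succ_le hμ i).trans (by linarith [log_two_lt_d9])
  have hH₀ : dyadEntropyR μ 0 ≤ 2 + log r := calc
    dyadEntropyR μ 0 ≤ log (2 * r + 2) := dyadEntropyR_zero_le hμ
    _ ≤ log (4 * r) := log_le_log (by linarith) (by linarith)
    _ = 2 * log 2 + log r := by
      rw [log_mul (by norm_num) (by linarith), show (4 : ℝ) = 2 ^ 2 by norm_num, log_pow]
      norm_num
    _ ≤ 2 + log r := by linarith [log_two_lt_d9]
  have hm₁ : (1 : ℝ) ≤ m := by exact_mod_cast hm
  refine (abs_div_sub_avg_shift_le hstep (dyadEntropyR_nonneg μ)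
    (monotone_nat_of_le_succ (dyadEntropyR_le_succ hμ)) hm (hm.trans hmn)).trans ?_
  exact div_le_div_of_nonneg_right (by linarith [log_nonneg hr]) n.cast_nonneg
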